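/- arXiv:1412.4830 — 3 statements merged into one kernel-verified Lean document; each statement's English description precedes it below -/
import Mathlib

section
/- Let a_0, ..., a_{n-1} be positive real numbers, and for a sequence w_1, ..., w_n of reals, define the affine maps g_i(v) = B_i v + C_i where B_i = a_0 a_1 ⋯ a_{i-1} (and B_0 = 1, g_0(v) = v) and C_i = Σ_{k=1}^{i} (a_k a_{k+1} ⋯ a_{i-1}) w_k. Let D_i = Σ_{k=1}^{i} (a_k ⋯ a_{i-1}) be the analogous quantity with all w_k = 1, and f_i(v) = B_i v + D_i. If |w_k| ≤ 1 for all k, then min over v ∈ ℝ of max_{0 ≤ i ≤ n} |g_i(v)| is at most min over v ∈ ℝ of max_{0 ≤ i ≤ n} |f_i(v)|. That is, the uniform translation by 1 is the worst perturbation. -/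
/-!
Dividing `v_i` by `B_i = a_0 ⋯ a_{i-1}` turns the orbit from `x` into `x + c_i` with
`c_i = ∑_{k ≤ i} w_k / B_k`, and the constraint `|v_i| ≤ M` into `x ∈ [-c_i - M/B_i, -c_i + M/B_i]`.
Intervals on the line have a common point as soon as they meet pairwise, i.e. iff
`|c_j - c_i| ≤ M/B_i + M/B_j` for all `i, j`. For `w ≡ 1` the drift `d_i = ∑_{k ≤ i} 1/B_k`
dominates every other one, `|c_j - c_i| ≤ |d_j - d_i|`, so every bound `M` achievable for `w ≡ 1`
is achievable for `w`.
-/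

/-- The orbit of the affine recursion `v_{i+1} = a_i v_i + w_{i+1}` starting at `v0`. -/
noncomputable def orb (a w : ℕ → ℝ) (v0 : ℝ) : ℕ → ℝ
  | 0 => v0
  | i + 1 => a i * orb a w v0 i + w (i + 1)

open Finset

theorem Finset.exists_forall_mem_Icc_iff {ι α : Type*} [Lattice α] [Nonempty α] {s : Finset ι}
    {l u : ι → α} : (∃ x, ∀ i ∈ s, x ∈ Set.Icc (l i) (u i)) ↔ ∀ i ∈ s, ∀ j ∈ s, l i ≤ u j := by
  constructor
  · rintro ⟨x, hx⟩ i hi j hj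
    exact (hx i hi).1.trans (hx j hj).2
  · intro h
    rcases s.eq_empty_or_nonempty with rfl | hs
    · simp
    · exact ⟨s.sup' hs l, fun j hj => ⟨le_sup' l hj, sup'_le hs l fun i hi => h i hi j hj⟩⟩

theorem exists_forall_abs_add_le_iff {ι : Type*} {s : Finset ι} {c r : ι → ℝ} :
    (∃ x, ∀ i ∈ s, |x + c i| ≤ r i) ↔ ∀ i ∈ s, ∀ j ∈ s, |c j - c i| ≤ r i + r j := by
  have hIcc : ∀ x i, |x + c i| ≤ r i ↔ x ∈ Set.Icc (-r i - c i) (r i - c i) := fun x i => by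
    rw [abs_le, Set.mem_Icc]; constructor <;> rintro ⟨_, _⟩ <;> constructor <;> linarith
  simp only [hIcc, exists_forall_mem_Icc_iff]
  refine ⟨fun h i hi j hj => abs_le.2 ⟨?_, ?_⟩, fun h i hi j hj => ?_⟩
  · linarith [h j hj i hi]
  · linarith [h i hi j hj]
  · linarith [le_abs_self (c j - c i), h i hi j hj]

theorem exists_forall_abs_add_le_of_abs_sub_le {ι : Type*} {s : Finset ι} {c d r : ι → ℝ}
    (hcd : ∀ i ∈ s, ∀ j ∈ s, |c j - c i| ≤ |d j - d i|) (hd : ∃ x, ∀ i ∈ s, |x + d i| ≤ r i) :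
    ∃ x, ∀ i ∈ s, |x + c i| ≤ r i := by
  rw [exists_forall_abs_add_le_iff] at hd ⊢
  exact fun i hi j hj => (hcd i hi j hj).trans (hd i hi j hj)

/-- The orbit in the coordinates `v_i / (a_0 ⋯ a_{i-1})`, in which the linear part is the
identity, is `x + drift a w i`. -/
noncomputable def drift (a w : ℕ → ℝ) (i : ℕ) : ℝ :=
  ∑ k ∈ range i, w (k + 1) / ∏ m ∈ range (k + 1), a m

theorem orb_eq_prod_mul {a : ℕ → ℝ} (ha : ∀ i, a i ≠ 0) (w : ℕ → ℝ) (x : ℝ) (i : ℕ) :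
    orb a w x i = (∏ k ∈ range i, a k) * (x + drift a w i) := by
  induction i with
  | zero => simp [orb, drift]
  | succ i ih =>
    have hB : ∏ k ∈ range (i + 1), a k ≠ 0 := prod_ne_zero_iff.2 fun k _ => ha k
    rw [orb, ih, drift, drift, sum_range_succ, ← add_assoc, mul_add _ _ (w (i + 1) / _),
      mul_div_cancel₀ _ hB, prod_range_succ]
    ring

theorem abs_orb_le_iff {a : ℕ → ℝ} (ha : ∀ i, 0 < a i) {w : ℕ → ℝ} {x M : ℝ} {i : ℕ} :
    |orb a w x i| ≤ M ↔ |x + drift a w i| ≤ M / ∏ k ∈ range i, a k := by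
  have hB : 0 < ∏ k ∈ range i, a k := prod_pos fun k _ => ha k
  rw [orb_eq_prod_mul (fun i => (ha i).ne'), abs_mul, abs_of_pos hB, le_div_iff₀ hB, mul_comm]

theorem abs_drift_sub_le_of_le {a w : ℕ → ℝ} (ha : ∀ i, 0 < a i) (hw : ∀ k, |w k| ≤ 1)
    {i j : ℕ} (hij : i ≤ j) :
    |drift a w j - drift a w i| ≤ drift a (fun _ => 1) j - drift a (fun _ => 1) i := by
  simp only [drift, ← sum_Ico_eq_sub _ hij]
  refine (abs_sum_le_sum_abs _ _).trans (sum_le_sum fun k _ => ?_)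
  have hB : 0 < ∏ m ∈ range (k + 1), a m := prod_pos fun m _ => ha m
  rw [abs_div, abs_of_pos hB]
  exact div_le_div_of_nonneg_right (hw _) hB.le

theorem abs_drift_sub_le {a w : ℕ → ℝ} (ha : ∀ i, 0 < a i) (hw : ∀ k, |w k| ≤ 1) (i j : ℕ) :
    |drift a w j - drift a w i| ≤ |drift a (fun _ => 1) j - drift a (fun _ => 1) i| := by
  rcases le_total i j with hij | hji
  · exact (abs_drift_sub_le_of_le ha hw hij).trans (le_abs_self _)
  · rw [abs_sub_comm, abs_sub_comm (drift _ _ j)]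
    exact (abs_drift_sub_le_of_le ha hw hji).trans (le_abs_self _)

/-- The uniform translation by `1` is the worst perturbation: if `|w_k| ≤ 1` for all `k`,
then the minimal sup-norm of an orbit of the perturbation `{w_i}` is at most that of the
constant perturbation `{1}`. -/
theorem stmt0 (n : ℕ) (a w : ℕ → ℝ) (ha : ∀ i, 0 < a i) (hw : ∀ k, |w k| ≤ 1) :
    (⨅ v0 : ℝ, (Finset.range (n + 1)).sup' Finset.nonempty_range_add_one
      fun i => |orb a w v0 i|) ≤
    ⨅ v0 : ℝ, (Finset.range (n + 1)).sup' Finset.nonempty_range_add_one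
      fun i => |orb a (fun _ => 1) v0 i| := by
  refine le_ciInf fun v0 => ?_
  set M := (range (n + 1)).sup' nonempty_range_add_one fun i => |orb a (fun _ => 1) v0 i|
  obtain ⟨x, hx⟩ := exists_forall_abs_add_le_of_abs_sub_le (r := fun i => M / ∏ k ∈ range i, a k)
    (fun i _ j _ => abs_drift_sub_le ha hw i j)
    ⟨v0, fun i hi => (abs_orb_le_iff ha).1 (le_sup' (fun i => |orb a (fun _ => 1) v0 i|) hi)⟩
  have hbdd : BddBelow (Set.range fun v : ℝ =>
      (range (n + 1)).sup' nonempty_range_add_one fun i => |orb a w v i|) := by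
    refine ⟨0, ?_⟩
    rintro _ ⟨v, rfl⟩
    exact (abs_nonneg _).trans (le_sup' (fun i => |orb a w v i|) (mem_range.2 n.succ_pos))
  exact (ciInf_le hbdd x).trans (sup'_le _ _ fun i hi => (abs_orb_le_iff ha).2 (hx i hi))
end

section
/- For a sequence of affine maps on ℝ, g_i(v) = B_i v + C_i with B_i > 0, define G_n(v) = max_{0 ≤ i ≤ n} |g_i(v)|. Then G_n is a convex function of v, and its minimum over ℝ equals the maximum over all pairs (i_1, i_2) with i_1, i_2 ≤ n of min over v of max{|g_{i_1}(v)|, |g_{i_2}(v)|}. -/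
/-! The sublevel set `{v | |B v + C| < m}` of an affine function with positive slope is an open
interval. If `m` exceeds every pairwise min-max, these intervals pairwise intersect, so by Helly's
theorem on the line they have a common point `w`, at which `G_n(w) < m`. Hence `min G_n` is at most
the largest pairwise min-max; the reverse inequality holds because `G_n` dominates every pairwise
maximum. -/

open Set

theorem ConvexOn.finset_sup' {𝕜 E β ι : Type*} [Semiring 𝕜] [PartialOrder 𝕜] [AddCommMonoid E]
    [SMul 𝕜 E] [AddCommMonoid β] [LinearOrder β] [IsOrderedAddMonoid β] [Module 𝕜 β]
    [PosSMulStrictMono 𝕜 β] {S : Set E} {s : Finset ι} (hs : s.Nonempty) {f : ι → E → β}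
    (hf : ∀ i ∈ s, ConvexOn 𝕜 S (f i)) : ConvexOn 𝕜 S fun x => s.sup' hs fun i => f i x := by
  simp_rw [← Finset.sup'_apply]
  exact Finset.sup'_induction hs f (fun _ hf _ hg => hf.sup hg) hf

theorem convexOn_abs_mul_add (b c : ℝ) : ConvexOn ℝ univ fun v : ℝ => |b * v + c| := by
  let g : ℝ →ᵃ[ℝ] ℝ := (LinearMap.lsmul ℝ ℝ b).toAffineMap + AffineMap.const ℝ ℝ c
  have hg : ∀ v, g v = b * v + c := fun v => rfl
  simpa [Function.comp_def, hg] using convexOn_univ_norm.comp_affineMap g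

theorem abs_mul_add_lt_iff {b c m v : ℝ} (hb : 0 < b) :
    |b * v + c| < m ↔ v ∈ Ioo ((-m - c) / b) ((m - c) / b) := by
  rw [abs_lt, mem_Ioo, div_lt_iff₀ hb, lt_div_iff₀ hb]
  constructor <;> rintro ⟨h₁, h₂⟩ <;> constructor <;> linarith

theorem Finset.exists_forall_mem_Ioo_of_pairwise_nonempty {α ι : Type*} [LinearOrder α]
    [DenselyOrdered α] [NoMinOrder α] [NoMaxOrder α] [Nonempty α] (s : Finset ι) (a b : ι → α)
    (h : ∀ i ∈ s, ∀ j ∈ s, (Set.Ioo (a i) (b i) ∩ Set.Ioo (a j) (b j)).Nonempty) :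
    ∃ w, ∀ i ∈ s, w ∈ Set.Ioo (a i) (b i) := by
  classical
  have hab : ∀ x ∈ s.image a, ∀ y ∈ s.image b, x < y := by
    simp only [Finset.mem_image]
    rintro _ ⟨i, hi, rfl⟩ _ ⟨j, hj, rfl⟩
    obtain ⟨v, ⟨hiv, -⟩, -, hvj⟩ := h i hi j hj
    exact hiv.trans hvj
  obtain ⟨w, hlo, hhi⟩ := Order.exists_between_finsets _ _ hab
  exact ⟨w, fun i hi =>
    ⟨hlo _ (Finset.mem_image_of_mem a hi), hhi _ (Finset.mem_image_of_mem b hi)⟩⟩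

theorem exists_forall_abs_mul_add_lt {ι : Type*} {s : Finset ι} {B C : ι → ℝ} {m : ℝ}
    (hB : ∀ i ∈ s, 0 < B i)
    (h : ∀ i ∈ s, ∀ j ∈ s, ∃ v, |B i * v + C i| < m ∧ |B j * v + C j| < m) :
    ∃ w, ∀ i ∈ s, |B i * w + C i| < m := by
  obtain ⟨w, hw⟩ := s.exists_forall_mem_Ioo_of_pairwise_nonempty
    (fun i => (-m - C i) / B i) (fun i => (m - C i) / B i) fun i hi j hj => by
      obtain ⟨v, hvi, hvj⟩ := h i hi j hj
      exact ⟨v, (abs_mul_add_lt_iff (hB i hi)).1 hvi, (abs_mul_add_lt_iff (hB j hj)).1 hvj⟩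
  exact ⟨w, fun i hi => (abs_mul_add_lt_iff (hB i hi)).2 (hw i hi)⟩

theorem ciInf_sup'_abs_mul_add_eq_sup'_ciInf_max {ι : Type*} {s : Finset ι} (hs : s.Nonempty)
    {B C : ι → ℝ} (hB : ∀ i ∈ s, 0 < B i) :
    (⨅ v : ℝ, s.sup' hs fun i => |B i * v + C i|) =
      (s ×ˢ s).sup' (hs.product hs)
        fun p => ⨅ v : ℝ, max |B p.1 * v + C p.1| |B p.2 * v + C p.2| := by
  set G : ℝ → ℝ := fun v => s.sup' hs fun i => |B i * v + C i|
  have hG : BddBelow (range G) := by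
    have ⟨i, hi⟩ := hs
    exact ⟨0, forall_mem_range.2 fun v => (Finset.le_sup'_iff hs).2 ⟨i, hi, abs_nonneg _⟩⟩
  refine le_antisymm ?_ (Finset.sup'_le _ _ fun p hp => ?_)
  · by_contra! hlt
    have hpair : ∀ i ∈ s, ∀ j ∈ s, ∃ v, |B i * v + C i| < iInf G ∧ |B j * v + C j| < iInf G := by
      intro i hi j hj
      obtain ⟨v, hv⟩ := exists_lt_of_ciInf_lt <|
        (Finset.le_sup' (fun p : ι × ι => ⨅ v : ℝ, max |B p.1 * v + C p.1| |B p.2 * v + C p.2|)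
          (Finset.mk_mem_product hi hj)).trans_lt hlt
      exact ⟨v, max_lt_iff.1 hv⟩
    obtain ⟨w, hw⟩ := exists_forall_abs_mul_add_lt hB hpair
    exact (ciInf_le hG w).not_gt ((Finset.sup'_lt_iff _).2 hw)
  · obtain ⟨h₁, h₂⟩ := Finset.mem_product.1 hp
    exact ciInf_mono ⟨0, forall_mem_range.2 fun v => (abs_nonneg _).trans (le_max_left _ _)⟩
      fun v => max_le (Finset.le_sup' (fun i => |B i * v + C i|) h₁)
        (Finset.le_sup' (fun i => |B i * v + C i|) h₂)

/-- `G_n(v) = max_{0 ≤ i ≤ n} |B_i v + C_i|` with all slopes positive is convex, and its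
minimum over `ℝ` is the maximum over pairs `(i₁, i₂)` of the min over `v` of the pairwise
maximum `max {|g_{i₁}(v)|, |g_{i₂}(v)|}`. -/
theorem stmt2 (n : ℕ) (B C : ℕ → ℝ) (hB : ∀ i, 0 < B i) :
    ConvexOn ℝ Set.univ (fun v : ℝ => (Finset.range (n + 1)).sup'
      Finset.nonempty_range_add_one fun i => |B i * v + C i|) ∧
    (⨅ v : ℝ, (Finset.range (n + 1)).sup' Finset.nonempty_range_add_one
        fun i => |B i * v + C i|) =
      ((Finset.range (n + 1)) ×ˢ (Finset.range (n + 1))).sup'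
        (Finset.nonempty_range_add_one.product Finset.nonempty_range_add_one)
        fun p => ⨅ v : ℝ, max |B p.1 * v + C p.1| |B p.2 * v + C p.2| :=
  ⟨ConvexOn.finset_sup' _ fun i _ => convexOn_abs_mul_add (B i) (C i),
    ciInf_sup'_abs_mul_add_eq_sup'_ciInf_max _ fun i _ => hB i⟩
end

section
/- Suppose there exists Q > 0 such that for all m ∈ ℤ and n ∈ ℕ there exists a sequence v_m, ..., v_{m+2n} with v_{i+1} = a_i v_i - 1 and |v_i| ≤ Q for all i, where all a_i > 0. Then there exists n_0 ∈ ℕ such that for every m ∈ ℤ, either Π_{i=m}^{m+n_0-1} a_i > 2 or Π_{i=m+n_0}^{m+2n_0-1} a_i < 1/2. -/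
lemma ico_split (f : ℤ → ℝ) {p q r : ℤ} (hpq : p ≤ q) (hqr : q ≤ r) :
    (∏ i ∈ Finset.Ico p q, f i) * ∏ i ∈ Finset.Ico q r, f i = ∏ i ∈ Finset.Ico p r, f i := by
  rw [← Finset.prod_union (Finset.Ico_disjoint_Ico_consecutive p q r),
    Finset.Ico_union_Ico_eq_Ico hpq hqr]

lemma ico_singleton (f : ℤ → ℝ) (q : ℤ) : ∏ i ∈ Finset.Ico q (q+1), f i = f q := by
  have : Finset.Ico q (q+1) = {q} := by ext x; simp [Finset.mem_Ico]; omega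
  rw [this, Finset.prod_singleton]

lemma orbit_identity (a : ℤ → ℝ) (v : ℤ → ℝ) (p : ℤ) :
    ∀ N : ℕ, (∀ i : ℤ, p ≤ i → i < p + (N:ℤ) → v (i+1) = a i * v i - 1) →
    v (p + (N:ℤ)) = (∏ i ∈ Finset.Ico p (p + (N:ℤ)), a i) * v p
      - ∑ k ∈ Finset.range N, ∏ i ∈ Finset.Ico (p + (N:ℤ) - (k:ℤ)) (p + (N:ℤ)), a i := by
  intro N
  induction N with
  | zero => intro _; simp
  | succ N ih =>
    intro hrec
    have ih' := ih (fun i h1 h2 => hrec i h1 (by push_cast; omega))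
    have hstep := hrec (p + (N:ℤ)) (by omega) (by push_cast; omega)
    have hcast : p + ((N:ℕ)+1 : ℕ) = (p + (N:ℤ)) + 1 := by push_cast; ring
    rw [hcast, hstep, ih']
    have hprod : (∏ i ∈ Finset.Ico p (p + (N:ℤ) + 1), a i)
        = (∏ i ∈ Finset.Ico p (p + (N:ℤ)), a i) * a (p + (N:ℤ)) := by
      rw [← ico_split a (by omega : p ≤ p + (N:ℤ)) (by omega : p + (N:ℤ) ≤ p + (N:ℤ) + 1),
        ico_singleton]
    have hsum : (∑ k ∈ Finset.range (N+1),
          ∏ i ∈ Finset.Ico (p + (N:ℤ) + 1 - (k:ℤ)) (p + (N:ℤ) + 1), a i)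
        = (∑ k ∈ Finset.range N,
            (∏ i ∈ Finset.Ico (p + (N:ℤ) - (k:ℤ)) (p + (N:ℤ)), a i) * a (p + (N:ℤ))) + 1 := by
      rw [Finset.sum_range_succ'
        (fun k => ∏ i ∈ Finset.Ico (p + (N:ℤ) + 1 - (k:ℤ)) (p + (N:ℤ) + 1), a i)]
      congr 1
      · apply Finset.sum_congr rfl
        intro k _
        rw [show (p + (N:ℤ) + 1 - ((k:ℕ)+1:ℕ) : ℤ) = p + (N:ℤ) - (k:ℤ) by push_cast; ring,
          ← ico_split a (by omega : p + (N:ℤ) - (k:ℤ) ≤ p + (N:ℤ))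
            (by omega : p + (N:ℤ) ≤ p + (N:ℤ) + 1), ico_singleton]
      · simp
    rw [hprod, hsum, ← Finset.sum_mul]
    ring

/-- If the one-dimensional cocycle `(a_i)_{i ∈ ℤ}` of positive multipliers admits, for every
`m ∈ ℤ` and `n ∈ ℕ`, an orbit of `v_{i+1} = a_i v_i - 1` on `[m, m+2n]` bounded by `Q`,
then there is `n₀` such that for every `m`, either the product of `n₀` consecutive
multipliers starting at `m` exceeds `2`, or the next such product is below `1/2`. -/
theorem stmt5 (a : ℤ → ℝ) (ha : ∀ i, 0 < a i) (Q : ℝ) (hQ : 0 < Q)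
    (hbdd : ∀ m : ℤ, ∀ n : ℕ, ∃ v : ℤ → ℝ,
      (∀ i : ℤ, m ≤ i → i < m + 2 * (n : ℤ) → v (i + 1) = a i * v i - 1) ∧
      (∀ i : ℤ, m ≤ i → i ≤ m + 2 * (n : ℤ) → |v i| ≤ Q)) :
    ∃ n0 : ℕ, ∀ m : ℤ,
      2 < ∏ i ∈ Finset.Ico m (m + (n0 : ℤ)), a i ∨
      ∏ i ∈ Finset.Ico (m + (n0 : ℤ)) (m + 2 * (n0 : ℤ)), a i < 1 / 2 := by
  have hpos : ∀ s : Finset ℤ, 0 < ∏ i ∈ s, a i := fun s => Finset.prod_pos fun i _ => ha i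
  set n0 : ℕ := ⌈8*Q^3 + 6*Q^2⌉₊ + 2 with hn0def
  have hn0R : 8*Q^3 + 6*Q^2 + 2 ≤ (n0:ℝ) := by
    have h := Nat.le_ceil (8*Q^3 + 6*Q^2)
    have : ((⌈8*Q^3 + 6*Q^2⌉₊ + 2 : ℕ) : ℝ) = (⌈8*Q^3 + 6*Q^2⌉₊ : ℝ) + 2 := by push_cast; ring
    rw [hn0def, this]; linarith
  have hQ2 : 0 < Q^2 := by positivity
  have hQ3 : 0 < Q^3 := by positivity
  have h2n0 : 2 ≤ n0 := by omega
  have hn0Rpos : (2:ℝ) ≤ (n0:ℝ) := by exact_mod_cast Nat.cast_le.mpr h2n0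
  refine ⟨n0, fun m => ?_⟩
  by_contra hcon
  push_neg at hcon
  obtain ⟨hP1, hP2⟩ := hcon
  -- Step 1: tail sums of block 1 are ≤ 3Q
  obtain ⟨v, hvrec, hvbd⟩ := hbdd m n0
  have hid1 := orbit_identity a v m n0 (fun i h1 h2 => hvrec i h1 (by omega))
  have hvm := abs_le.mp (hvbd m le_rfl (by omega))
  have hvmid := abs_le.mp (hvbd (m + (n0:ℤ)) (by omega) (by omega))
  have hP1pos := hpos (Finset.Ico m (m + (n0:ℤ)))
  have hS1 : (∑ k ∈ Finset.range n0,
      ∏ i ∈ Finset.Ico (m + (n0:ℤ) - (k:ℤ)) (m + (n0:ℤ)), a i) ≤ 3*Q := by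
    have h1 : (∏ i ∈ Finset.Ico m (m + (n0:ℤ)), a i) * v m
        ≤ (∏ i ∈ Finset.Ico m (m + (n0:ℤ)), a i) * Q :=
      mul_le_mul_of_nonneg_left hvm.2 hP1pos.le
    have h2 : (∏ i ∈ Finset.Ico m (m + (n0:ℤ)), a i) * Q ≤ 2*Q :=
      by nlinarith
    linarith [hvmid.1, hid1, h1]
  -- Step 2: pick a tiny tail product μ_r
  have hsubset : (∑ k ∈ Finset.Ico 1 n0,
      ∏ i ∈ Finset.Ico (m + (n0:ℤ) - (k:ℤ)) (m + (n0:ℤ)), a i) ≤ 3*Q := by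
    refine le_trans (Finset.sum_le_sum_of_subset_of_nonneg ?_ fun i _ _ => (hpos _).le) hS1
    intro x hx; simp only [Finset.mem_Ico, Finset.mem_range] at *; omega
  have hcardIco : ((Finset.Ico 1 n0).card : ℝ) = (n0:ℝ) - 1 := by
    rw [Nat.card_Ico]; push_cast [Nat.cast_sub (by omega : 1 ≤ n0)]; ring
  have hsum_const : (∑ _k ∈ Finset.Ico 1 n0, 3*Q / ((n0:ℝ) - 1)) = 3*Q := by
    have hne : (n0:ℝ) - 1 ≠ 0 := by linarith
    rw [Finset.sum_const, nsmul_eq_mul, hcardIco, mul_comm, div_mul_cancel₀ _ hne]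
  obtain ⟨r, hrmem, hrle⟩ := Finset.exists_le_of_sum_le
    (f := fun k : ℕ => ∏ i ∈ Finset.Ico (m + (n0:ℤ) - (k:ℤ)) (m + (n0:ℤ)), a i)
    (g := fun _ : ℕ => 3*Q / ((n0:ℝ) - 1))
    (⟨1, by simp only [Finset.mem_Ico]; omega⟩ : (Finset.Ico 1 n0).Nonempty)
    (by rw [hsum_const]; exact hsubset)
  simp only [Finset.mem_Ico] at hrmem
  obtain ⟨hr1, hr2⟩ := hrmem
  have hμQ : (∏ i ∈ Finset.Ico (m + (n0:ℤ) - (r:ℤ)) (m + (n0:ℤ)), a i) * Q ≤ 1/2 := by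
    have h1 := mul_le_mul_of_nonneg_right hrle hQ.le
    have h2 : 3*Q / ((n0:ℝ) - 1) * Q ≤ 1/2 := by
      rw [div_mul_eq_mul_div, div_le_iff₀ (by linarith : (0:ℝ) < (n0:ℝ) - 1)]
      nlinarith
    linarith
  -- Step 3: orbit starting at m+n0-r is ≤ -1/2 at m+n0; prefixes of block 2 are ≤ 2Q
  obtain ⟨u, hurec, hubd⟩ := hbdd (m + (n0:ℤ) - (r:ℤ)) n0
  have hidr := orbit_identity a u (m + (n0:ℤ) - (r:ℤ)) r
    (fun i h1 h2 => hurec i h1 (by omega))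
  rw [show m + (n0:ℤ) - (r:ℤ) + (r:ℤ) = m + (n0:ℤ) by ring] at hidr
  have hSr : 1 ≤ ∑ k ∈ Finset.range r,
      ∏ i ∈ Finset.Ico (m + (n0:ℤ) - (k:ℤ)) (m + (n0:ℤ)), a i := by
    have h0 := Finset.single_le_sum
      (f := fun k : ℕ => ∏ i ∈ Finset.Ico (m + (n0:ℤ) - (k:ℤ)) (m + (n0:ℤ)), a i)
      (fun i _ => (hpos _).le) (Finset.mem_range.mpr (by omega : 0 < r))
    simpa using h0
  have hup := abs_le.mp (hubd (m + (n0:ℤ) - (r:ℤ)) le_rfl (by omega))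
  have hμpos := hpos (Finset.Ico (m + (n0:ℤ) - (r:ℤ)) (m + (n0:ℤ)))
  have humid : u (m + (n0:ℤ)) ≤ -(1/2) := by
    have h1 : (∏ i ∈ Finset.Ico (m + (n0:ℤ) - (r:ℤ)) (m + (n0:ℤ)), a i) * u (m + (n0:ℤ) - (r:ℤ))
        ≤ (∏ i ∈ Finset.Ico (m + (n0:ℤ) - (r:ℤ)) (m + (n0:ℤ)), a i) * Q :=
      mul_le_mul_of_nonneg_left hup.2 hμpos.le
    linarith [hidr, hμQ, hSr]
  have hblock2 : ∀ j : ℕ, j ≤ n0 →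
      (∏ i ∈ Finset.Ico (m + (n0:ℤ)) (m + (n0:ℤ) + (j:ℤ)), a i) ≤ 2*Q := by
    intro j hj
    have hidj := orbit_identity a u (m + (n0:ℤ)) j
      (fun i h1 h2 => hurec i (by omega) (by omega))
    have hSj : 0 ≤ ∑ k ∈ Finset.range j,
        ∏ i ∈ Finset.Ico (m + (n0:ℤ) + (j:ℤ) - (k:ℤ)) (m + (n0:ℤ) + (j:ℤ)), a i :=
      Finset.sum_nonneg fun k _ => (hpos _).le
    have hbd1 := abs_le.mp (hubd (m + (n0:ℤ) + (j:ℤ)) (by omega) (by omega))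
    have hPjpos := hpos (Finset.Ico (m + (n0:ℤ)) (m + (n0:ℤ) + (j:ℤ)))
    have h1 : (∏ i ∈ Finset.Ico (m + (n0:ℤ)) (m + (n0:ℤ) + (j:ℤ)), a i) * u (m + (n0:ℤ))
        ≤ (∏ i ∈ Finset.Ico (m + (n0:ℤ)) (m + (n0:ℤ) + (j:ℤ)), a i) * (-(1/2)) :=
      mul_le_mul_of_nonneg_left humid hPjpos.le
    linarith [hbd1.1, hidj, hSj]
  -- Step 4: all tail products of block 2 are ≥ 1/(4Q)
  have hν : ∀ k ∈ Finset.range n0,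
      1/(4*Q) ≤ ∏ i ∈ Finset.Ico (m + 2*(n0:ℤ) - (k:ℤ)) (m + 2*(n0:ℤ)), a i := by
    intro k hk
    rw [Finset.mem_range] at hk
    have hsplit := ico_split a (by omega : m + (n0:ℤ) ≤ m + 2*(n0:ℤ) - (k:ℤ))
      (by omega : m + 2*(n0:ℤ) - (k:ℤ) ≤ m + 2*(n0:ℤ))
    have hpref : (∏ i ∈ Finset.Ico (m + (n0:ℤ)) (m + 2*(n0:ℤ) - (k:ℤ)), a i) ≤ 2*Q := by
      have h := hblock2 (n0 - k) (by omega)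
      rw [show m + (n0:ℤ) + ((n0 - k : ℕ):ℤ) = m + 2*(n0:ℤ) - (k:ℤ) by
        push_cast [Nat.cast_sub hk.le]; ring] at h
      exact h
    have hνpos := hpos (Finset.Ico (m + 2*(n0:ℤ) - (k:ℤ)) (m + 2*(n0:ℤ)))
    have hprefpos := hpos (Finset.Ico (m + (n0:ℤ)) (m + 2*(n0:ℤ) - (k:ℤ)))
    have hA : (∏ i ∈ Finset.Ico (m + (n0:ℤ)) (m + 2*(n0:ℤ) - (k:ℤ)), a i)
        * (∏ i ∈ Finset.Ico (m + 2*(n0:ℤ) - (k:ℤ)) (m + 2*(n0:ℤ)), a i)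
        ≤ 2*Q * (∏ i ∈ Finset.Ico (m + 2*(n0:ℤ) - (k:ℤ)) (m + 2*(n0:ℤ)), a i) :=
      mul_le_mul_of_nonneg_right hpref hνpos.le
    rw [div_le_iff₀ (by positivity : (0:ℝ) < 4*Q)]
    rw [hsplit] at hA
    linarith
  -- Step 5: but the orbit on [m+n0, m+3n0] bounds the sum of these tails by 2Q²+Q
  obtain ⟨w, hwrec, hwbd⟩ := hbdd (m + (n0:ℤ)) n0
  have hid2 := orbit_identity a w (m + (n0:ℤ)) n0 (fun i h1 h2 => hwrec i h1 (by omega))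
  rw [show m + (n0:ℤ) + (n0:ℤ) = m + 2*(n0:ℤ) by ring] at hid2
  have hwm := abs_le.mp (hwbd (m + (n0:ℤ)) le_rfl (by omega))
  have hwend := abs_le.mp (hwbd (m + 2*(n0:ℤ)) (by omega) (by omega))
  have hP2le : (∏ i ∈ Finset.Ico (m + (n0:ℤ)) (m + 2*(n0:ℤ)), a i) ≤ 2*Q := by
    have h := hblock2 n0 le_rfl
    rw [show m + (n0:ℤ) + (n0:ℤ) = m + 2*(n0:ℤ) by ring] at h
    exact h
  have hP2pos := hpos (Finset.Ico (m + (n0:ℤ)) (m + 2*(n0:ℤ)))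
  have hupper : (∑ k ∈ Finset.range n0,
      ∏ i ∈ Finset.Ico (m + 2*(n0:ℤ) - (k:ℤ)) (m + 2*(n0:ℤ)), a i) ≤ 2*Q*Q + Q := by
    have h1 : (∏ i ∈ Finset.Ico (m + (n0:ℤ)) (m + 2*(n0:ℤ)), a i) * w (m + (n0:ℤ))
        ≤ (∏ i ∈ Finset.Ico (m + (n0:ℤ)) (m + 2*(n0:ℤ)), a i) * Q :=
      mul_le_mul_of_nonneg_left hwm.2 hP2pos.le
    have h2 : (∏ i ∈ Finset.Ico (m + (n0:ℤ)) (m + 2*(n0:ℤ)), a i) * Q ≤ 2*Q*Q :=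
      mul_le_mul_of_nonneg_right hP2le hQ.le
    linarith [hwend.1, hid2, h1]
  have hlower : (n0:ℝ) * (1/(4*Q)) ≤ ∑ k ∈ Finset.range n0,
      ∏ i ∈ Finset.Ico (m + 2*(n0:ℤ) - (k:ℤ)) (m + 2*(n0:ℤ)), a i := by
    have h := Finset.card_nsmul_le_sum (Finset.range n0) _ _ hν
    rwa [Finset.card_range, nsmul_eq_mul] at h
  have hfinal : (n0:ℝ) ≤ 8*Q^3 + 4*Q^2 := by
    have h := le_trans hlower hupper
    have h2 := mul_le_mul_of_nonneg_right h (by positivity : (0:ℝ) ≤ 4*Q)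
    have h3 : (n0:ℝ) * (1/(4*Q)) * (4*Q) = (n0:ℝ) := by field_simp
    nlinarith
  linarith
end
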